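/- arXiv:1509.08053 — 5 statements merged into one kernel-verified Lean document; each statement's English description precedes it below -/
import Mathlib

section
/- Let F be a finite field with q elements, let V be an n-dimensional F-vector space and let W be a k-dimensional subspace of V with 0 ≤ k < n. Then the number of simple linear transformations T : W → V equals ∏_{i=1}^{k} (q^n − q^i). -/
/-- A linear map `T : W → V` defined on a subspace `W` of `V` is *simple* if the only
`T`-invariant subspace properly contained in `V` is the zero subspace. A subspace `U` of `V`
is `T`-invariant if `U ⊆ W` and `T(U) ⊆ U`. -/
def IsSimple {F V : Type*} [Field F] [AddCommGroup V] [Module F V]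
    (W : Submodule F V) (T : W →ₗ[F] V) : Prop :=
  ∀ U : Submodule F V, U ≤ W → (∀ x : W, (x : V) ∈ U → T x ∈ U) → U ≠ ⊤ → U = ⊥

/-!
Every `T : W → V` has a largest invariant subspace `T.invariantCore ≤ W`, and for `W ≠ V` the map
`T` is simple iff this core is `0`. Induct on `dim W`, peeling off a hyperplane `W₀` of `W`:
restricting a simple map to `W₀` gives a simple map. Fix a simple `S : W₀ → V`; its extensions
`T` to `W` are parametrised by `T v ∈ V` for any `v ∈ W \ W₀`. A nonzero core `U` of an extension
is not contained in `W₀`, and for `v ∈ U \ W₀` the extensions with core `U` are exactly those with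
`T v ∈ U`, so there are `|U|` of them. The possible cores `U` cut `W \ W₀` into the pieces `U \ W₀`
of size `(q - 1)|U|/q`. So `S` has `|W|` non-simple extensions and `q ^ n - q ^ dim W` simple ones.
-/

open Module Submodule

theorem Nat.card_subtype_and_add_card_subtype_and_not {α : Type*} [Finite α] (p q : α → Prop) :
    Nat.card {x // p x ∧ q x} + Nat.card {x // p x ∧ ¬q x} = Nat.card {x // p x} := by
  classical
  rw [← Nat.card_sum]
  exact Nat.card_congr <|
    ((Equiv.subtypeSubtypeEquivSubtypeInter p q).symm.sumCongr
      (Equiv.subtypeSubtypeEquivSubtypeInter p (¬q ·)).symm).trans (Equiv.sumCompl _)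

namespace Submodule

variable {F V : Type*} [Field F] [AddCommGroup V] [Module F V] {W₀ W : Submodule F V}

theorem exists_notMem_of_finrank_add_one_eq (hle : W₀ ≤ W)
    (hW₀ : finrank F W₀ + 1 = finrank F W) : ∃ v ∈ W, v ∉ W₀ :=
  SetLike.exists_of_lt (lt_of_le_of_ne hle fun h => by rw [h] at hW₀; omega)

variable [FiniteDimensional F V]

theorem exists_le_finrank_add_one_eq (hW : W ≠ ⊥) : ∃ W₀ ≤ W, finrank F W₀ + 1 = finrank F W := by
  obtain ⟨w, hwW, hw⟩ := exists_mem_ne_zero_of_ne_bot hW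
  obtain ⟨C, hC⟩ := (span F {w}).exists_isCompl
  have hwC : w ∉ W ⊓ C := fun h =>
    hw (disjoint_def.mp hC.disjoint w (mem_span_singleton_self w) (mem_inf.mp h).2)
  have hsup : W ⊓ C ⊔ span F {w} = W := by
    rw [inf_sup_assoc_of_le _ ((span_singleton_le_iff_mem _ _).mpr hwW), sup_comm, hC.sup_eq_top,
      inf_top_eq]
  exact ⟨W ⊓ C, inf_le_left, by rw [← finrank_sup_span_singleton hwC, hsup]⟩

theorem sup_span_singleton_eq_of_finrank_add_one_eq (hle : W₀ ≤ W)
    (hW₀ : finrank F W₀ + 1 = finrank F W) {v : V} (hvW : v ∈ W) (hvW₀ : v ∉ W₀) :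
    W₀ ⊔ span F {v} = W :=
  eq_of_le_of_finrank_eq (sup_le hle ((span_singleton_le_iff_mem _ _).mpr hvW))
    (by rw [finrank_sup_span_singleton hvW₀, hW₀])

theorem natCard_eq_natCard_mul_natCard_inf {U : Submodule F V} {v : V} (hvU : v ∈ U)
    (hvW₀ : v ∉ W₀) (hU : U ≤ W₀ ⊔ span F {v}) :
    Nat.card U = Nat.card F * Nat.card ↥(U ⊓ W₀) := by
  have hsup : U ⊓ W₀ ⊔ span F {v} = U := by
    rw [inf_sup_assoc_of_le _ ((span_singleton_le_iff_mem _ _).mpr hvU), inf_eq_left.mpr hU]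
  have hdim : finrank F U = finrank F ↥(U ⊓ W₀) + 1 := by
    rw [← finrank_sup_span_singleton fun h => hvW₀ (mem_inf.mp h).2, hsup]
  rw [natCard_eq_pow_finrank (K := F), natCard_eq_pow_finrank (K := F) (V := ↥(U ⊓ W₀)), hdim,
    pow_succ, mul_comm]

theorem sub_one_mul_natCard_eq [Finite F] {U : Submodule F V} {v : V} (hvU : v ∈ U)
    (hvW₀ : v ∉ W₀) (hU : U ≤ W₀ ⊔ span F {v}) :
    (Nat.card F - 1) * Nat.card U = Nat.card F * Nat.card {x // x ∈ U ∧ x ∉ W₀} := by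
  have : Finite V := Module.finite_of_finite F
  have hsplit := Nat.card_subtype_and_add_card_subtype_and_not (· ∈ U) (· ∈ W₀)
  have hU' := natCard_eq_natCard_mul_natCard_inf hvU hvW₀ hU
  have hout : Nat.card {x // x ∈ U ∧ x ∉ W₀} = (Nat.card F - 1) * Nat.card ↥(U ⊓ W₀) := by
    change Nat.card ↥(U ⊓ W₀) + _ = Nat.card U at hsplit
    rw [Nat.sub_one_mul]
    omega
  rw [hout, hU']
  ring

end Submodule

namespace LinearMap

variable {F V : Type*} [Field F] [AddCommGroup V] [Module F V] {W₀ W : Submodule F V}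

def IsInvariant (T : W →ₗ[F] V) (U : Submodule F V) : Prop :=
  ∀ x : W, (x : V) ∈ U → T x ∈ U

def invariantCore (T : W →ₗ[F] V) : Submodule F V :=
  sSup {U | U ≤ W ∧ T.IsInvariant U}

variable {T T' : W →ₗ[F] V} {U : Submodule F V}

theorem isInvariant_bot : T.IsInvariant ⊥ := by
  intro x hx
  rw [mem_bot, ZeroMemClass.coe_eq_zero] at hx
  simp [hx]

theorem IsInvariant.sup {U' : Submodule F V} (hU : T.IsInvariant U) (hU' : T.IsInvariant U')
    (hUW : U ≤ W) (hU'W : U' ≤ W) : T.IsInvariant (U ⊔ U') := by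
  intro x hx
  obtain ⟨a, ha, b, hb, hab⟩ := mem_sup.mp hx
  have hx : x = ⟨a, hUW ha⟩ + ⟨b, hU'W hb⟩ := by ext; simp [hab]
  rw [hx, map_add]
  exact add_mem_sup (hU _ ha) (hU' _ hb)

theorem invariantCore_le : T.invariantCore ≤ W :=
  sSup_le fun _ hU => hU.1

theorem le_invariantCore (hUW : U ≤ W) (hU : T.IsInvariant U) : U ≤ T.invariantCore :=
  le_sSup ⟨hUW, hU⟩

theorem isInvariant_invariantCore : T.IsInvariant T.invariantCore := by
  have hne : {U | U ≤ W ∧ T.IsInvariant U}.Nonempty := ⟨⊥, bot_le, isInvariant_bot⟩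
  have hdir : DirectedOn (· ≤ ·) {U | U ≤ W ∧ T.IsInvariant U} := fun U₁ h₁ U₂ h₂ =>
    ⟨U₁ ⊔ U₂, ⟨sup_le h₁.1 h₂.1, h₁.2.sup h₂.2 h₁.1 h₂.1⟩, le_sup_left, le_sup_right⟩
  intro x hx
  obtain ⟨U, hU, hxU⟩ := (mem_sSup_of_directed hne hdir).mp hx
  exact le_invariantCore hU.1 hU.2 (hU.2 x hxU)

theorem isSimple_iff_invariantCore_eq_bot (hW : W ≠ ⊤) :
    IsSimple W T ↔ T.invariantCore = ⊥ := by
  refine ⟨fun h => h _ invariantCore_le isInvariant_invariantCore fun htop => ?_,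
    fun h U hUW hU _ => le_bot_iff.mp (h ▸ le_invariantCore hUW hU)⟩
  exact hW (top_le_iff.mp (htop ▸ invariantCore_le))

section Restriction

variable (hle : W₀ ≤ W)

theorem invariantCore_comp_inclusion_le :
    (T ∘ₗ inclusion hle).invariantCore ≤ T.invariantCore :=
  le_invariantCore (invariantCore_le.trans hle) fun x hx =>
    isInvariant_invariantCore (T := T ∘ₗ inclusion hle) ⟨x, invariantCore_le hx⟩ hx

theorem exists_mem_invariantCore_notMem (hS : (T ∘ₗ inclusion hle).invariantCore = ⊥)
    (hT : T.invariantCore ≠ ⊥) : ∃ v ∈ T.invariantCore, v ∉ W₀ := by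
  by_contra! h
  exact hT (le_bot_iff.mp (hS ▸ le_invariantCore h fun x hx => isInvariant_invariantCore _ hx))

theorem exists_eq_inclusion_add_smul {v : W} (hv : W ≤ W₀ ⊔ span F {(v : V)}) (x : W) :
    ∃ (a : W₀) (c : F), x = inclusion hle a + c • v := by
  obtain ⟨a, ha, b, hb, hab⟩ := mem_sup.mp (hv x.2)
  obtain ⟨c, rfl⟩ := mem_span_singleton.mp hb
  exact ⟨⟨a, ha⟩, c, by ext; simp [hab]⟩

theorem IsInvariant.of_comp_inclusion_eq (hTT' : T ∘ₗ inclusion hle = T' ∘ₗ inclusion hle)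
    (hT' : T'.IsInvariant U) {v : W} (hv : W ≤ W₀ ⊔ span F {(v : V)}) (hvU : (v : V) ∈ U)
    (hTv : T v ∈ U) : T.IsInvariant U := by
  intro x hx
  obtain ⟨a, c, rfl⟩ := exists_eq_inclusion_add_smul hle hv x
  have haU : (inclusion hle a : V) ∈ U := by
    simpa using sub_mem hx (smul_mem U c hvU)
  rw [map_add, map_smul, ← comp_apply, hTT', comp_apply]
  exact add_mem (hT' _ haU) (smul_mem U c hTv)

theorem invariantCore_eq_of_isInvariant (hTT' : T ∘ₗ inclusion hle = T' ∘ₗ inclusion hle)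
    {v : W} (hv : W ≤ W₀ ⊔ span F {(v : V)}) (hvT : (v : V) ∈ T.invariantCore)
    (hT' : T'.IsInvariant T.invariantCore) : T'.invariantCore = T.invariantCore := by
  have hle' : T.invariantCore ≤ T'.invariantCore := le_invariantCore invariantCore_le hT'
  refine le_antisymm (le_invariantCore invariantCore_le ?_) hle'
  exact isInvariant_invariantCore.of_comp_inclusion_eq hle hTT' hv (hle' hvT)
    (hle' (isInvariant_invariantCore v hvT))

def restrictEval (v : W) : (W →ₗ[F] V) →ₗ[F] (W₀ →ₗ[F] V) × V :=
  (lcomp F V (inclusion hle)).prod (applyₗ v)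

@[simp]
theorem restrictEval_apply (v : W) (T : W →ₗ[F] V) :
    restrictEval hle v T = (T ∘ₗ inclusion hle, T v) := rfl

def nonzeroExtensionCores (S : W₀ →ₗ[F] V) : Set (Submodule F V) :=
  {U | ∃ T : W →ₗ[F] V, (T ∘ₗ inclusion hle = S ∧ T.invariantCore ≠ ⊥) ∧ T.invariantCore = U}

end Restriction

section Extension

variable [FiniteDimensional F V] (hle : W₀ ≤ W) (hW₀ : finrank F W₀ + 1 = finrank F W)
  {S : W₀ →ₗ[F] V} {v : W}
include hW₀

theorem restrictEval_bijective (hvW₀ : (v : V) ∉ W₀) : Function.Bijective (restrictEval hle v) := by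
  have hv := (sup_span_singleton_eq_of_finrank_add_one_eq hle hW₀ v.2 hvW₀).ge
  have hinj : Function.Injective (restrictEval hle v) := by
    refine (injective_iff_map_eq_zero _).mpr fun T hT => ?_
    simp only [restrictEval_apply, Prod.mk_eq_zero] at hT
    ext x
    obtain ⟨a, c, rfl⟩ := exists_eq_inclusion_add_smul hle hv x
    rw [map_add, map_smul, ← comp_apply, hT.1, hT.2]
    simp
  refine ⟨hinj, (injective_iff_surjective_of_finrank_eq_finrank ?_).mp hinj⟩
  rw [finrank_linearMap, finrank_prod, finrank_linearMap, ← hW₀]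
  ring

theorem exists_comp_inclusion_eq_apply_eq (hvW₀ : (v : V) ∉ W₀) (S : W₀ →ₗ[F] V) (x : V) :
    ∃ T : W →ₗ[F] V, T ∘ₗ inclusion hle = S ∧ T v = x := by
  obtain ⟨T, hT⟩ := (restrictEval_bijective hle hW₀ hvW₀).2 (S, x)
  exact ⟨T, Prod.ext_iff.mp hT⟩

theorem natCard_comp_inclusion_eq_and_apply (hvW₀ : (v : V) ∉ W₀) (S : W₀ →ₗ[F] V)
    (P : V → Prop) :
    Nat.card {T : W →ₗ[F] V // T ∘ₗ inclusion hle = S ∧ P (T v)} = Nat.card {x // P x} := by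
  refine Nat.card_eq_of_bijective (fun T => ⟨T.1 v, T.2.2⟩) ⟨fun T T' h => ?_, fun x => ?_⟩
  · exact Subtype.ext <| (restrictEval_bijective hle hW₀ hvW₀).1 <|
      Prod.ext (T.2.1.trans T'.2.1.symm) (congrArg Subtype.val h)
  · obtain ⟨T, hTS, hTx⟩ := exists_comp_inclusion_eq_apply_eq hle hW₀ hvW₀ S x
    exact ⟨⟨T, hTS, hTx ▸ x.2⟩, Subtype.ext hTx⟩

theorem exists_comp_inclusion_eq_mem_invariantCore (hvW₀ : (v : V) ∉ W₀) (S : W₀ →ₗ[F] V) :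
    ∃ T : W →ₗ[F] V, T ∘ₗ inclusion hle = S ∧ (v : V) ∈ T.invariantCore := by
  obtain ⟨T, hTS, hTv⟩ := exists_comp_inclusion_eq_apply_eq hle hW₀ hvW₀ S v
  refine ⟨T, hTS, le_invariantCore ((span_singleton_le_iff_mem _ _).mpr v.2) ?_
    (mem_span_singleton_self _)⟩
  intro x hx
  obtain ⟨c, hc⟩ := mem_span_singleton.mp hx
  rw [show x = c • v from Subtype.ext hc.symm, map_smul, hTv]
  exact smul_mem _ _ (mem_span_singleton_self _)

theorem invariantCore_eq_of_mem {T T' : W →ₗ[F] V} (hT : T ∘ₗ inclusion hle = S)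
    (hT' : T' ∘ₗ inclusion hle = S) (hvW₀ : (v : V) ∉ W₀) (hvT : (v : V) ∈ T.invariantCore)
    (hvT' : (v : V) ∈ T'.invariantCore) : T.invariantCore = T'.invariantCore := by
  have hv := (sup_span_singleton_eq_of_finrank_add_one_eq hle hW₀ v.2 hvW₀).ge
  -- compare both cores with that of the extension fixing `v`
  obtain ⟨T₀, hT₀, hT₀v⟩ := exists_comp_inclusion_eq_apply_eq hle hW₀ hvW₀ S v
  have key : ∀ T : W →ₗ[F] V, T ∘ₗ inclusion hle = S → (v : V) ∈ T.invariantCore →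
      T₀.invariantCore = T.invariantCore := fun T hT hvT =>
    invariantCore_eq_of_isInvariant hle (hT.trans hT₀.symm) hv hvT <|
      isInvariant_invariantCore.of_comp_inclusion_eq hle (hT₀.trans hT.symm) hv hvT (hT₀v ▸ hvT)
  exact (key T hT hvT).symm.trans (key T' hT' hvT')

theorem natCard_comp_inclusion_eq_and_invariantCore_eq {T₀ : W →ₗ[F] V}
    (hT₀ : T₀ ∘ₗ inclusion hle = S) (hvW₀ : (v : V) ∉ W₀) (hvT₀ : (v : V) ∈ T₀.invariantCore) :
    Nat.card {T : W →ₗ[F] V // T ∘ₗ inclusion hle = S ∧ T.invariantCore = T₀.invariantCore} =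
      Nat.card T₀.invariantCore := by
  have hv := (sup_span_singleton_eq_of_finrank_add_one_eq hle hW₀ v.2 hvW₀).ge
  have hiff : ∀ T : W →ₗ[F] V, T ∘ₗ inclusion hle = S →
      (T.invariantCore = T₀.invariantCore ↔ T v ∈ T₀.invariantCore) := fun T hT =>
    ⟨fun h => h ▸ isInvariant_invariantCore v (h ▸ hvT₀), fun h =>
      invariantCore_eq_of_isInvariant hle (hT₀.trans hT.symm) hv hvT₀ <|
        isInvariant_invariantCore.of_comp_inclusion_eq hle (hT.trans hT₀.symm) hv hvT₀ h⟩
  exact (Nat.card_congr (Equiv.subtypeEquivRight fun T => and_congr_right (hiff T))).trans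
    (natCard_comp_inclusion_eq_and_apply hle hW₀ hvW₀ S (· ∈ T₀.invariantCore))

end Extension

section Count

open Finset

variable [FiniteDimensional F V] [Finite F] {S : W₀ →ₗ[F] V}

theorem finite_nonzeroExtensionCores (hle : W₀ ≤ W) (S : W₀ →ₗ[F] V) :
    (nonzeroExtensionCores hle S).Finite := by
  have : Finite (W →ₗ[F] V) := Module.finite_of_finite F
  exact (Set.finite_range invariantCore).subset fun _ ⟨T, _, hTU⟩ => ⟨T, hTU⟩

theorem natCard_comp_inclusion_eq_and_invariantCore_ne_bot_eq_sum {hle : W₀ ≤ W}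
    (hW₀ : finrank F W₀ + 1 = finrank F W) (hS : S.invariantCore = ⊥)
    (hfin : (nonzeroExtensionCores hle S).Finite) :
    Nat.card {T : W →ₗ[F] V // T ∘ₗ inclusion hle = S ∧ T.invariantCore ≠ ⊥} =
      ∑ U ∈ hfin.toFinset, Nat.card U := by
  classical
  have : Finite (W →ₗ[F] V) := Module.finite_of_finite F
  have := Fintype.ofFinite (W →ₗ[F] V)
  rw [Nat.card_eq_fintype_card, Fintype.card_subtype,
    card_eq_sum_card_fiberwise fun T hT => hfin.mem_toFinset.mpr ⟨T, by simpa using hT, rfl⟩]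
  refine sum_congr rfl fun U hU => ?_
  obtain ⟨T₀, ⟨hT₀, hT₀U⟩, rfl⟩ := hfin.mem_toFinset.mp hU
  obtain ⟨v, hvT₀, hvW₀⟩ := exists_mem_invariantCore_notMem hle (hT₀ ▸ hS) hT₀U
  rw [← natCard_comp_inclusion_eq_and_invariantCore_eq hle hW₀ hT₀
    (v := ⟨v, invariantCore_le hvT₀⟩) hvW₀ hvT₀, Nat.card_eq_fintype_card, Fintype.card_subtype,
    filter_filter]
  congr 1
  ext T
  simp only [mem_filter, mem_univ, true_and]
  exact ⟨fun ⟨⟨hT, _⟩, hTU⟩ => ⟨hT, hTU⟩, fun ⟨hT, hTU⟩ => ⟨⟨hT, hTU ▸ hT₀U⟩, hTU⟩⟩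

theorem natCard_mem_and_notMem_eq_sum {hle : W₀ ≤ W} (hW₀ : finrank F W₀ + 1 = finrank F W)
    (hfin : (nonzeroExtensionCores hle S).Finite) :
    Nat.card {x // x ∈ W ∧ x ∉ W₀} = ∑ U ∈ hfin.toFinset, Nat.card {x // x ∈ U ∧ x ∉ W₀} := by
  classical
  have : Finite V := Module.finite_of_finite F
  have := Fintype.ofFinite V
  simp only [Nat.card_eq_fintype_card, Fintype.card_subtype]
  rw [← card_biUnion]
  · congr 1
    ext x
    simp only [mem_biUnion, mem_filter, mem_univ, true_and, Set.Finite.mem_toFinset,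
      nonzeroExtensionCores, Set.mem_ofPred_eq]
    constructor
    · rintro ⟨hxW, hxW₀⟩
      obtain ⟨T, hT, hxT⟩ :=
        exists_comp_inclusion_eq_mem_invariantCore hle hW₀ (v := ⟨x, hxW⟩) hxW₀ S
      exact ⟨_, ⟨T, ⟨hT, fun h => hxW₀ (by simp_all)⟩, rfl⟩, hxT, hxW₀⟩
    · rintro ⟨_, ⟨T, -, rfl⟩, hxT, hxW₀⟩
      exact ⟨invariantCore_le hxT, hxW₀⟩
  · intro U hU U' hU' hne
    obtain ⟨T, ⟨hT, -⟩, rfl⟩ := hfin.mem_toFinset.mp hU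
    obtain ⟨T', ⟨hT', -⟩, rfl⟩ := hfin.mem_toFinset.mp hU'
    refine disjoint_left.mpr fun x hx hx' => hne ?_
    simp only [mem_filter, mem_univ, true_and] at hx hx'
    exact invariantCore_eq_of_mem hle hW₀ (v := ⟨x, invariantCore_le hx.1⟩) hT hT' hx.2 hx.1 hx'.1

theorem natCard_comp_inclusion_eq_and_invariantCore_ne_bot (hle : W₀ ≤ W)
    (hW₀ : finrank F W₀ + 1 = finrank F W) (hS : S.invariantCore = ⊥) :
    Nat.card {T : W →ₗ[F] V // T ∘ₗ inclusion hle = S ∧ T.invariantCore ≠ ⊥} = Nat.card W := by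
  have hfin := finite_nonzeroExtensionCores hle S
  set q := Nat.card F
  have hq : 0 < q - 1 := by have := Finite.one_lt_card (α := F); omega
  obtain ⟨w, hwW, hwW₀⟩ := exists_notMem_of_finrank_add_one_eq hle hW₀
  apply Nat.eq_of_mul_eq_mul_left hq
  calc (q - 1) * Nat.card {T : W →ₗ[F] V // T ∘ₗ inclusion hle = S ∧ T.invariantCore ≠ ⊥}
      = ∑ U ∈ hfin.toFinset, (q - 1) * Nat.card U := by
        rw [natCard_comp_inclusion_eq_and_invariantCore_ne_bot_eq_sum hW₀ hS hfin, mul_sum]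
    _ = ∑ U ∈ hfin.toFinset, q * Nat.card {x // x ∈ U ∧ x ∉ W₀} := by
        refine sum_congr rfl fun U hU => ?_
        obtain ⟨T, ⟨hT, hTU⟩, rfl⟩ := hfin.mem_toFinset.mp hU
        obtain ⟨v, hvT, hvW₀⟩ := exists_mem_invariantCore_notMem hle (hT ▸ hS) hTU
        exact sub_one_mul_natCard_eq hvT hvW₀ (invariantCore_le.trans
          (sup_span_singleton_eq_of_finrank_add_one_eq hle hW₀ (invariantCore_le hvT) hvW₀).ge)
    _ = (q - 1) * Nat.card W := by
        rw [← mul_sum, ← natCard_mem_and_notMem_eq_sum hW₀ hfin, sub_one_mul_natCard_eq hwW hwW₀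
          (sup_span_singleton_eq_of_finrank_add_one_eq hle hW₀ hwW hwW₀).ge]

theorem natCard_comp_inclusion_eq_and_invariantCore_eq_bot (hle : W₀ ≤ W)
    (hW₀ : finrank F W₀ + 1 = finrank F W) (hS : S.invariantCore = ⊥) :
    Nat.card {T : W →ₗ[F] V // T ∘ₗ inclusion hle = S ∧ T.invariantCore = ⊥} =
      Nat.card V - Nat.card W := by
  have : Finite (W →ₗ[F] V) := Module.finite_of_finite F
  obtain ⟨w, hwW, hwW₀⟩ := exists_notMem_of_finrank_add_one_eq hle hW₀
  have hfib : Nat.card {T : W →ₗ[F] V // T ∘ₗ inclusion hle = S} = Nat.card V := by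
    simpa using natCard_comp_inclusion_eq_and_apply hle hW₀ (v := ⟨w, hwW⟩) hwW₀ S fun _ => True
  have hsplit := Nat.card_subtype_and_add_card_subtype_and_not
    (fun T : W →ₗ[F] V => T ∘ₗ inclusion hle = S) (fun T => T.invariantCore = ⊥)
  rw [← hfib, ← hsplit, natCard_comp_inclusion_eq_and_invariantCore_ne_bot hle hW₀ hS]
  omega

theorem natCard_invariantCore_eq_bot_eq_mul (hle : W₀ ≤ W)
    (hW₀ : finrank F W₀ + 1 = finrank F W) :
    Nat.card {T : W →ₗ[F] V // T.invariantCore = ⊥} =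
      Nat.card {S : W₀ →ₗ[F] V // S.invariantCore = ⊥} * (Nat.card V - Nat.card W) := by
  classical
  have : Finite (W →ₗ[F] V) := Module.finite_of_finite F
  have : Finite (W₀ →ₗ[F] V) := Module.finite_of_finite F
  have := Fintype.ofFinite (W →ₗ[F] V)
  have := Fintype.ofFinite (W₀ →ₗ[F] V)
  simp only [Nat.card_eq_fintype_card, Fintype.card_subtype]
  rw [card_eq_sum_card_fiberwise (f := (· ∘ₗ inclusion hle)) (t := {S | S.invariantCore = ⊥}),
    ← smul_eq_mul, ← sum_const]
  · refine sum_congr rfl fun S hS => ?_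
    rw [← natCard_comp_inclusion_eq_and_invariantCore_eq_bot hle hW₀ (mem_filter.mp hS).2,
      Nat.card_eq_fintype_card, Fintype.card_subtype, filter_filter]
    simp only [and_comm]
  · intro T hT
    simp only [coe_filter, mem_univ, true_and, Set.mem_ofPred_eq] at hT ⊢
    exact le_bot_iff.mp (hT ▸ invariantCore_comp_inclusion_le hle)

theorem natCard_invariantCore_eq_bot (k : ℕ) (W : Submodule F V) (hW : finrank F W = k) :
    Nat.card {T : W →ₗ[F] V // T.invariantCore = ⊥} =
      ∏ i ∈ Icc 1 k, (Nat.card F ^ finrank F V - Nat.card F ^ i) := by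
  induction k generalizing W with
  | zero =>
    obtain rfl := finrank_eq_zero.mp hW
    have hT (T : (⊥ : Submodule F V) →ₗ[F] V) : T.invariantCore = ⊥ :=
      le_bot_iff.mp invariantCore_le
    simp [hT]
  | succ k ih =>
    obtain ⟨W₀, hle, hW₀⟩ := exists_le_finrank_add_one_eq (W := W) (by rintro rfl; simp at hW)
    rw [natCard_invariantCore_eq_bot_eq_mul hle hW₀, ih W₀ (by omega), prod_Icc_succ_top (by omega),
      natCard_eq_pow_finrank (K := F) (V := V), natCard_eq_pow_finrank (K := F) (V := W), hW]

end Count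

end LinearMap

theorem number_of_simple_maps {F V : Type*} [Field F] [Fintype F]
    [AddCommGroup V] [Module F V] [FiniteDimensional F V]
    (q n k : ℕ) (hq : Fintype.card F = q)
    (hn : Module.finrank F V = n) (W : Submodule F V)
    (hW : Module.finrank F W = k) (hkn : k < n) :
    Nat.card {T : W →ₗ[F] V // IsSimple W T} =
      ∏ i ∈ Finset.Icc 1 k, (q ^ n - q ^ i) := by
  have hW_ne_top : W ≠ ⊤ := by
    rintro rfl
    rw [finrank_top] at hW
    omega
  rw [Nat.card_congr (Equiv.subtypeEquivRight fun T =>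
      LinearMap.isSimple_iff_invariantCore_eq_bot hW_ne_top),
    LinearMap.natCard_invariantCore_eq_bot k W hW, Nat.card_eq_fintype_card, hq, hn]
end

section
/- Let F_q be a finite field, 1 ≤ k < n, A ∈ M_k(F_q) and C ∈ M_{n−k,k}(F_q). The n × k polynomial matrix [xI_k − A; −C] is unimodular over F_q[x] (i.e., every common divisor of its k × k minors is a unit) if and only if the (n−k)k × k block matrix obtained by stacking C, CA, CA^2, …, CA^{k−1} has rank k. -/
/-- An `m × k` polynomial matrix (with `#m ≥ k`) is *unimodular* if every common divisor
of its `k × k` minors is a unit (equivalently, all its invariant factors equal `1`). -/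
def Matrix.Unimodular {F : Type*} [Field F] {m : Type*} [Fintype m] [DecidableEq m] {k : ℕ}
    (M : Matrix m (Fin k) (Polynomial F)) : Prop :=
  ∀ g : Polynomial F,
    (∀ f : Fin k → m, Function.Injective f → g ∣ (M.submatrix f id).det) → IsUnit g

/-- The `(k + r) × k` polynomial matrix `[xI_k − A; −C]`. -/
noncomputable def xIminusAC {F : Type*} [Field F] {k r : ℕ} (A : Matrix (Fin k) (Fin k) F)
    (C : Matrix (Fin r) (Fin k) F) : Matrix (Fin k ⊕ Fin r) (Fin k) (Polynomial F) :=
  Matrix.of fun i j =>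
    Sum.elim (fun i' => (if i' = j then Polynomial.X else 0) - Polynomial.C (A i' j))
      (fun i'' => - Polynomial.C (C i'' j)) i

/-!
Both conditions say that no eigenvector of `A` over an algebraic closure `K` of `F` lies in
`ker C` (the Popov–Belevitch–Hautus test). A non-unit common divisor of the maximal minors of
`[xI − A; −C]` has a root `z ∈ K`, and conversely the minimal polynomial of `z` divides every
minor vanishing at `z`; so unimodularity means that `[zI − A; −C]` is injective for every `z ∈ K`.
By Cayley–Hamilton the kernel of the observability matrix is `⋂ᵢ ker (C Aⁱ)`, an `A`-invariant
subspace, which is nonzero exactly when it contains an eigenvector of `A`. Full column rank is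
witnessed by a nonzero maximal minor, so it does not change under the extension `F ⊆ K`.
-/

open Matrix Polynomial

namespace Matrix

variable {R S F K L m n : Type*}

section Rank

variable [Field L] [Fintype n]

theorem rank_eq_card_iff_exists_det_submatrix_ne_zero [Fintype m] [DecidableEq n]
    (M : Matrix m n L) :
    M.rank = Fintype.card n ↔ ∃ f : n → m, Function.Injective f ∧ (M.submatrix f id).det ≠ 0 := by
  constructor
  · intro hM
    obtain ⟨κ, a, ha, hspan, hli⟩ := exists_linearIndependent' L M.row
    have : Fintype κ := Fintype.ofInjective a ha
    have hκ : Fintype.card κ = Fintype.card n := by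
      rw [← hM, rank_eq_finrank_span_row, ← hspan, finrank_span_eq_card hli]
    let e : n ≃ κ := Fintype.equivOfCardEq hκ.symm
    refine ⟨a ∘ e, ha.comp e.injective, ?_⟩
    rw [← isUnit_iff_ne_zero, ← isUnit_iff_isUnit_det, ← linearIndependent_rows_iff_isUnit]
    exact hli.comp e e.injective
  · rintro ⟨f, -, hf⟩
    refine le_antisymm M.rank_le_card_width ?_
    calc Fintype.card n = (M.submatrix f id).rank :=
          (rank_of_isUnit _ ((isUnit_iff_isUnit_det _).mpr (isUnit_iff_ne_zero.mpr hf))).symm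
      _ ≤ M.rank := M.rank_submatrix_le f id

theorem rank_map_eq_card_iff [Field K] [Fintype m] [DecidableEq n] (φ : L →+* K)
    (M : Matrix m n L) :
    (M.map φ).rank = Fintype.card n ↔ M.rank = Fintype.card n := by
  have hdet (f : n → m) : ((M.map φ).submatrix f id).det = φ (M.submatrix f id).det :=
    (φ.map_det _).symm
  simp only [rank_eq_card_iff_exists_det_submatrix_ne_zero, hdet, _root_.map_ne_zero]

theorem rank_eq_card_iff_mulVec_eq_zero (M : Matrix m n L) :
    M.rank = Fintype.card n ↔ ∀ v, M *ᵥ v = 0 → v = 0 := by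
  rw [← ker_mulVecLin_eq_bot_iff, ← Submodule.finrank_eq_zero, rank]
  have := M.mulVecLin.finrank_range_add_finrank_ker
  rw [Module.finrank_fintype_fun_eq_card] at this
  omega

end Rank

theorem unimodular_iff_forall_rank_map_aeval [Field F] [Field K] [IsAlgClosed K] [Algebra F K]
    [Fintype m] [DecidableEq m] {k : ℕ} (M : Matrix m (Fin k) F[X]) :
    M.Unimodular ↔ ∀ z : K, (M.map (aeval z)).rank = k := by
  have hminor (z : K) (f : Fin k → m) :
      ((M.map (aeval z)).submatrix f id).det = aeval z (M.submatrix f id).det :=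
    ((aeval z).map_det _).symm
  have hrank (z : K) : (M.map (aeval z)).rank = k ↔
      ∃ f : Fin k → m, Function.Injective f ∧ aeval z (M.submatrix f id).det ≠ 0 := by
    simpa [hminor] using rank_eq_card_iff_exists_det_submatrix_ne_zero (M.map (aeval z))
  simp only [hrank]
  constructor
  · intro hM z
    by_contra! hz
    exact minpoly.not_isUnit F z (hM _ fun f hf => minpoly.dvd F z (hz f hf))
  · intro hM g hg
    by_contra hgu
    obtain ⟨z, hz⟩ := IsAlgClosed.exists_aeval_eq_zero K g (mt isUnit_iff_degree_eq_zero.mpr hgu)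
    obtain ⟨f, hf, hdet⟩ := hM z
    obtain ⟨h, hh⟩ := hg f hf
    exact hdet (by rw [hh, map_mul, hz, zero_mul])

theorem exists_pow_eq_sum_range_pow [CommRing R] [Nontrivial R] [Fintype n] [DecidableEq n]
    (A : Matrix n n R) (i : ℕ) :
    ∃ c : ℕ → R, A ^ i = ∑ j ∈ Finset.range (Fintype.card n), c j • A ^ j := by
  set p := X ^ i %ₘ A.charpoly
  refine ⟨p.coeff, ?_⟩
  rw [pow_eq_aeval_mod_charpoly]
  rcases eq_or_ne p 0 with hp | hp
  · simp [p, hp]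
  · refine aeval_eq_sum_range' ?_ A
    rw [← A.charpoly_natDegree_eq_dim]
    exact natDegree_lt_natDegree hp (degree_modByMonic_lt _ A.charpoly_monic)

theorem pow_mulVec_of_mulVec_eq_smul [CommSemiring R] [Fintype n] [DecidableEq n]
    {A : Matrix n n R} {z : R} {v : n → R} (hv : A *ᵥ v = z • v) (i : ℕ) :
    A ^ i *ᵥ v = z ^ i • v := by
  induction i with
  | zero => simp
  | succ i ih => rw [pow_succ', ← mulVec_mulVec, ih, mulVec_smul, hv, smul_smul, pow_succ]

def observability [Semiring R] {k : ℕ} (C : Matrix m (Fin k) R) (A : Matrix (Fin k) (Fin k) R) :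
    Matrix (Fin k × m) (Fin k) R :=
  of fun p j => (C * A ^ (p.1 : ℕ)) p.2 j

theorem observability_map [Semiring R] [Semiring S] {k : ℕ} (φ : R →+* S)
    (C : Matrix m (Fin k) R) (A : Matrix (Fin k) (Fin k) R) :
    (C.observability A).map φ = (C.map φ).observability (A.map φ) := by
  ext p j
  simp only [observability, map_apply, of_apply, ← Matrix.map_pow, ← Matrix.map_mul]

theorem observability_mulVec_eq_zero_iff [CommRing R] [Nontrivial R] {k : ℕ}
    (C : Matrix m (Fin k) R) (A : Matrix (Fin k) (Fin k) R) (v : Fin k → R) :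
    C.observability A *ᵥ v = 0 ↔ ∀ i : ℕ, C *ᵥ (A ^ i *ᵥ v) = 0 := by
  have hblock : C.observability A *ᵥ v = 0 ↔ ∀ j : Fin k, C *ᵥ (A ^ (j : ℕ) *ᵥ v) = 0 := by
    simp only [funext_iff, Prod.forall, mulVec_mulVec, Pi.zero_apply]
    exact Iff.rfl
  refine hblock.trans ⟨fun h i => ?_, fun h j => h j⟩
  obtain ⟨c, hc⟩ := A.exists_pow_eq_sum_range_pow i
  rw [hc, sum_mulVec, mulVec_sum]
  refine Finset.sum_eq_zero fun j hj => ?_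
  rw [smul_mulVec, mulVec_smul, h ⟨j, by simpa using hj⟩, smul_zero]

theorem rank_observability_eq_iff [Field K] [IsAlgClosed K] {k : ℕ}
    (C : Matrix m (Fin k) K) (A : Matrix (Fin k) (Fin k) K) :
    (C.observability A).rank = k ↔ ∀ (z : K) v, A *ᵥ v = z • v → C *ᵥ v = 0 → v = 0 := by
  have hker := (C.observability A).rank_eq_card_iff_mulVec_eq_zero
  rw [Fintype.card_fin] at hker
  simp only [hker, observability_mulVec_eq_zero_iff]
  refine ⟨fun hobs z v hAv hCv => hobs v fun i => ?_, fun heig v hv => ?_⟩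
  · rw [pow_mulVec_of_mulVec_eq_smul hAv, mulVec_smul, hCv, smul_zero]
  let U : Submodule K (Fin k → K) := ⨅ i : ℕ, LinearMap.ker (C * A ^ i).mulVecLin
  have mem_U (w) : w ∈ U ↔ ∀ i : ℕ, C *ᵥ (A ^ i *ᵥ w) = 0 := by
    simp [U, mulVec_mulVec]
  have hAU : ∀ w ∈ U, A.mulVecLin w ∈ U := fun w hw => (mem_U _).2 fun i => by
    rw [mulVecLin_apply, mulVec_mulVec w (A ^ i), ← pow_succ, (mem_U w).1 hw]
  by_contra hv0
  have : Nontrivial U := nontrivial_of_ne ⟨v, (mem_U v).2 hv⟩ 0 (by simpa using hv0)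
  obtain ⟨μ, hμ⟩ := Module.End.exists_eigenvalue (A.mulVecLin.restrict hAU)
  obtain ⟨w, hw⟩ := hμ.exists_hasEigenvector
  have hAw : A *ᵥ (w : Fin k → K) = μ • (w : Fin k → K) := congrArg Subtype.val hw.apply_eq_smul
  have hCw : C *ᵥ (w : Fin k → K) = 0 := by simpa using (mem_U w).1 w.2 0
  exact hw.2 (Subtype.ext (heig μ w hAw hCw))

end Matrix

section

variable {F K : Type*} [Field F] [CommRing K] [Algebra F K] {k r : ℕ}
  (A : Matrix (Fin k) (Fin k) F) (C : Matrix (Fin r) (Fin k) F) (z : K)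

theorem xIminusAC_map_aeval :
    (xIminusAC A C).map (aeval z) =
      fromRows (z • 1 - A.map (algebraMap F K)) (-C.map (algebraMap F K)) := by
  ext (i | i) j
  · by_cases h : i = j <;> simp [xIminusAC, h]
  · simp [xIminusAC]

theorem xIminusAC_map_aeval_mulVec_eq_zero_iff (v : Fin k → K) :
    (xIminusAC A C).map (aeval z) *ᵥ v = 0 ↔
      A.map (algebraMap F K) *ᵥ v = z • v ∧ C.map (algebraMap F K) *ᵥ v = 0 := by
  rw [xIminusAC_map_aeval, fromRows_mulVec, sub_mulVec, smul_mulVec, one_mulVec, neg_mulVec,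
    ← Sum.elim_zero_zero, Sum.elim_eq_iff, sub_eq_zero, neg_eq_zero, eq_comm (a := z • v)]

end

theorem unimodular_iff_observability_matrix_full_rank_general
    {F : Type*} [Field F] (n k : ℕ)
    (A : Matrix (Fin k) (Fin k) F) (C : Matrix (Fin (n - k)) (Fin k) F) :
    (xIminusAC A C).Unimodular ↔
      (Matrix.of fun (p : Fin k × Fin (n - k)) (j : Fin k) =>
        (C * A ^ (p.1 : ℕ)) p.2 j).rank = k := by
  let K := AlgebraicClosure F
  have hpointwise (z : K) : ((xIminusAC A C).map (aeval z)).rank = k ↔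
      ∀ v, A.map (algebraMap F K) *ᵥ v = z • v → C.map (algebraMap F K) *ᵥ v = 0 → v = 0 := by
    have h := ((xIminusAC A C).map (aeval z)).rank_eq_card_iff_mulVec_eq_zero
    rw [Fintype.card_fin] at h
    simp only [h, xIminusAC_map_aeval_mulVec_eq_zero_iff, and_imp]
  have hobs := rank_map_eq_card_iff (algebraMap F K) (C.observability A)
  rw [Fintype.card_fin, observability_map] at hobs
  change _ ↔ (C.observability A).rank = k
  rw [unimodular_iff_forall_rank_map_aeval (K := K), ← hobs, rank_observability_eq_iff]
  exact forall_congr' hpointwise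

theorem unimodular_iff_observability_matrix_full_rank
    {F : Type*} [Field F] [Fintype F] (n k : ℕ) (hk : 1 ≤ k) (hkn : k < n)
    (A : Matrix (Fin k) (Fin k) F) (C : Matrix (Fin (n - k)) (Fin k) F) :
    (xIminusAC A C).Unimodular ↔
      (Matrix.of fun (p : Fin k × Fin (n - k)) (j : Fin k) =>
        (C * A ^ (p.1 : ℕ)) p.2 j).rank = k :=
  unimodular_iff_observability_matrix_full_rank_general n k A C
end

section
/- Let F_q be a finite field, 1 ≤ k < n, and let V = F_q^n with standard basis u_1, …, u_n, and let W be the k-dimensional subspace spanned by u_1, …, u_k. Let A ∈ M_k(F_q), C ∈ M_{n−k,k}(F_q), and let T : W → V be the linear map whose matrix with respect to the bases (u_1,…,u_k) of W and (u_1,…,u_n) of V is the n × k block matrix [A; C]. Then T is simple if and only if (C, A) is a zero kernel pair, i.e. ⋂_{i=0}^{k−1} ker(C A^i) = {0}. -/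
open Polynomial in
theorem Matrix.pow_mem_span_pow_lt_card {R ι : Type*} [CommRing R] [Nontrivial R] [Fintype ι]
    [DecidableEq ι] (A : Matrix ι ι R) (m : ℕ) :
    A ^ m ∈ Submodule.span R ((A ^ ·) '' Set.Iio (Fintype.card ι)) := by
  rw [pow_eq_aeval_mod_charpoly, aeval_eq_sum_range]
  refine Submodule.sum_mem _ fun i _ => ?_
  by_cases hi : i < Fintype.card ι
  · exact Submodule.smul_mem _ _ (Submodule.subset_span ⟨i, hi, rfl⟩)
  · have hdeg : (X ^ m %ₘ A.charpoly).degree < i :=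
      (degree_modByMonic_lt _ A.charpoly_monic).trans_le
        (by rw [charpoly_degree_eq_dim]; exact_mod_cast not_lt.mp hi)
    rw [coeff_eq_zero_of_degree_lt hdeg, zero_smul]
    exact Submodule.zero_mem _

namespace Matrix

open LinearMap

variable {R ι κ : Type*} [Fintype ι] [DecidableEq ι]

theorem iInf_fin_ker_mul_pow_eq [CommRing R] [Nontrivial R] (A : Matrix ι ι R)
    (C : Matrix κ ι R) {m : ℕ} (hm : Fintype.card ι ≤ m) :
    ⨅ i : Fin m, ker (C * A ^ (i : ℕ)).mulVecLin = ⨅ i : ℕ, ker (C * A ^ i).mulVecLin := by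
  refine le_antisymm (le_iInf fun i x hx => ?_) (le_iInf fun i => iInf_le _ (i : ℕ))
  simp only [Submodule.mem_iInf, mem_ker, mulVecLin_apply] at hx ⊢
  refine Submodule.span_induction (p := fun M _ => (C * M) *ᵥ x = 0) ?_ (by simp)
    (fun M N _ _ hM hN => by simp [Matrix.mul_add, add_mulVec, hM, hN])
    (fun c M _ hM => by rw [Matrix.mul_smul, smul_mulVec, hM, smul_zero])
    (A.pow_mem_span_pow_lt_card i)
  rintro _ ⟨j, hj, rfl⟩
  exact hx ⟨j, hj.trans_le hm⟩

theorem iInf_ker_mul_pow_eq_bot_iff [CommSemiring R] (A : Matrix ι ι R) (C : Matrix κ ι R) :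
    ⨅ i : ℕ, ker (C * A ^ i).mulVecLin = ⊥ ↔
      ∀ P ∈ Module.End.invtSubmodule A.mulVecLin, P ≤ ker C.mulVecLin → P = ⊥ := by
  constructor
  · intro hK P hPA hPC
    refine eq_bot_iff.mpr (hK ▸ le_iInf fun i x hx => ?_)
    have hpow : (A ^ i) *ᵥ x ∈ P := by
      induction i with
      | zero => simpa using hx
      | succ i ih =>
        simpa [pow_succ', ← mulVec_mulVec] using
          (Module.End.mem_invtSubmodule_iff_forall_mem_of_mem _).mp hPA _ ih
    simpa [mulVec_mulVec] using hPC hpow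
  · intro h
    refine h _ ((Module.End.mem_invtSubmodule_iff_forall_mem_of_mem _).mpr fun x hx => ?_)
      (iInf_le_of_le 0 (by simp))
    simp only [Submodule.mem_iInf, mem_ker, mulVecLin_apply] at hx ⊢
    intro i
    simpa [mulVec_mulVec, pow_succ, Matrix.mul_assoc] using hx (i + 1)

end Matrix

theorem isSimple_iff_forall_eq_bot {F V E : Type*} [Field F] [AddCommGroup V] [Module F V]
    [AddCommGroup E] [Module F E] {W : Submodule F V} (hW : W ≠ ⊤) (T : W →ₗ[F] V)
    (e : E ≃ₗ[F] W) :
    IsSimple W T ↔ ∀ P : Submodule F E,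
      (∀ x ∈ P, T (e x) ∈ P.map (W.subtype ∘ₗ e.toLinearMap)) → P = ⊥ := by
  set f := W.subtype ∘ₗ e.toLinearMap
  have hf : Function.Injective f := W.injective_subtype.comp e.injective
  have hrange : LinearMap.range f = W := by
    rw [LinearMap.range_comp, LinearEquiv.range, Submodule.map_top, Submodule.range_subtype]
  constructor
  · intro hs P hP
    have hmap : P.map f ≤ W := hrange ▸ LinearMap.map_le_range
    refine Submodule.map_injective_of_injective hf ((hs _ hmap ?_
      (ne_top_of_le_ne_top hW hmap)).trans (Submodule.map_bot f).symm)
    rintro w ⟨x, hx, hxw⟩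
    obtain rfl : e x = w := Subtype.ext hxw
    exact hP x hx
  · intro h U hUW hUT _
    have hU : (U.comap f).map f = U := Submodule.map_comap_eq_of_le (hrange ▸ hUW)
    rw [← hU, h (U.comap f) fun x hx => by rw [hU]; exact hUT (e x) hx, Submodule.map_bot]

namespace Function.ExtendByZero

variable {R : Type*} [Semiring R]

theorem linearMap_single {ι η : Type*} [DecidableEq ι] [DecidableEq η] {s : ι → η}
    (hs : Injective s) (i : ι) (c : R) :
    linearMap R s (Pi.single i c) = Pi.single (s i) c := by
  funext b
  by_cases hb : ∃ a, s a = b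
  · obtain ⟨a, rfl⟩ := hb
    simp [hs.extend_apply, Pi.single_apply, hs.eq_iff]
  · rw [linearMap_apply, extend_apply' _ _ _ hb, Pi.zero_apply,
      Pi.single_eq_of_ne (fun h => hb ⟨i, h.symm⟩)]

theorem range_linearMap {ι η : Type*} [Finite ι] [DecidableEq ι] [DecidableEq η] {s : ι → η}
    (hs : Injective s) :
    LinearMap.range (linearMap R s) =
      Submodule.span R (Set.range fun i => Pi.single (s i) 1) := by
  rw [LinearMap.range_eq_map, ← (Pi.basisFun R ι).span_eq, Submodule.map_span, ← Set.range_comp]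
  congr 2 with i : 1
  rw [comp_apply, Pi.basisFun_apply, linearMap_single hs]

theorem linearMap_castLE_apply {k n : ℕ} (h : k ≤ n) (y : Fin k → R) (i : Fin n) :
    linearMap R (Fin.castLE h) y i = if hi : (i : ℕ) < k then y ⟨i, hi⟩ else 0 := by
  split_ifs with hi
  · exact (Fin.castLE_injective h).extend_apply y 0 ⟨i, hi⟩
  · exact extend_apply' _ _ _ (by rintro ⟨j, rfl⟩; exact hi j.isLt)

end Function.ExtendByZero

namespace Matrix

variable {R m : Type*} {n k : ℕ}

/-- The block matrix `[A; C]`. -/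
def stackRows (A : Matrix (Fin k) m R) (C : Matrix (Fin (n - k)) m R) : Matrix (Fin n) m R :=
  of fun i j => if h : (i : ℕ) < k then A ⟨i, h⟩ j else C ⟨i - k, by omega⟩ j

theorem stackRows_mulVec_apply [Fintype m] [NonUnitalNonAssocSemiring R] (A : Matrix (Fin k) m R)
    (C : Matrix (Fin (n - k)) m R) (x : m → R) (i : Fin n) :
    (stackRows A C *ᵥ x) i =
      if h : (i : ℕ) < k then (A *ᵥ x) ⟨i, h⟩ else (C *ᵥ x) ⟨i - k, by omega⟩ := by
  simp only [mulVec, dotProduct, stackRows, of_apply]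
  split_ifs <;> rfl

variable [Fintype m] [CommSemiring R] (h : k ≤ n)

theorem stackRows_mulVec_eq_extendByZero_iff (A : Matrix (Fin k) m R)
    (C : Matrix (Fin (n - k)) m R) (x : m → R) (y : Fin k → R) :
    stackRows A C *ᵥ x = Function.ExtendByZero.linearMap R (Fin.castLE h) y ↔
      A *ᵥ x = y ∧ C *ᵥ x = 0 := by
  simp only [funext_iff, stackRows_mulVec_apply, Function.ExtendByZero.linearMap_castLE_apply]
  refine ⟨fun hxy => ⟨fun j => ?_, fun l => ?_⟩, fun ⟨hA, hC⟩ i => ?_⟩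
  · simpa using hxy (Fin.castLE h j)
  · simpa using hxy ⟨k + l, by omega⟩
  · split_ifs
    · exact hA _
    · exact hC _

theorem stackRows_mulVec_mem_map_extendByZero_iff (A : Matrix (Fin k) m R)
    (C : Matrix (Fin (n - k)) m R) (P : Submodule R (Fin k → R)) (x : m → R) :
    stackRows A C *ᵥ x ∈ P.map (Function.ExtendByZero.linearMap R (Fin.castLE h)) ↔
      A *ᵥ x ∈ P ∧ C *ᵥ x = 0 := by
  simp only [Submodule.mem_map, eq_comm (b := stackRows A C *ᵥ x),
    stackRows_mulVec_eq_extendByZero_iff]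
  constructor
  · rintro ⟨_, hy, rfl, hC⟩
    exact ⟨hy, hC⟩
  · rintro ⟨hy, hC⟩
    exact ⟨_, hy, rfl, hC⟩

theorem forall_stackRows_mulVec_mem_map_iff (A : Matrix (Fin k) (Fin k) R)
    (C : Matrix (Fin (n - k)) (Fin k) R) (P : Submodule R (Fin k → R)) :
    (∀ x ∈ P, stackRows A C *ᵥ x ∈ P.map (Function.ExtendByZero.linearMap R (Fin.castLE h))) ↔
      P ∈ Module.End.invtSubmodule A.mulVecLin ∧ P ≤ LinearMap.ker C.mulVecLin := by
  simp only [stackRows_mulVec_mem_map_extendByZero_iff, forall_and,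
    Module.End.mem_invtSubmodule_iff_forall_mem_of_mem, SetLike.le_def, LinearMap.mem_ker,
    mulVecLin_apply]

end Matrix

theorem simple_iff_zero_kernel_pair {F : Type*} [Field F]
    (n k : ℕ) (hkn : k < n)
    (A : Matrix (Fin k) (Fin k) F) (C : Matrix (Fin (n - k)) (Fin k) F)
    (W : Submodule F (Fin n → F))
    (hW : W = Submodule.span F
      (Set.range fun j : Fin k => Pi.single (Fin.castLE hkn.le j) (1 : F)))
    (T : W →ₗ[F] (Fin n → F))
    (hT : ∀ (j : Fin k) (w : W), (w : Fin n → F) = Pi.single (Fin.castLE hkn.le j) 1 →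
      T w = fun i : Fin n =>
        if h : (i : ℕ) < k then A ⟨i, h⟩ j else C ⟨(i : ℕ) - k, by omega⟩ j) :
    IsSimple W T ↔
      ⨅ i : Fin k, LinearMap.ker (Matrix.mulVecLin (C * A ^ (i : ℕ))) = ⊥ := by
  set ι := Function.ExtendByZero.linearMap F (Fin.castLE hkn.le)
  have hι : Function.Injective ι := Function.extend_injective (Fin.castLE_injective _) 0
  have hrange : LinearMap.range ι = W := by
    rw [hW, Function.ExtendByZero.range_linearMap (Fin.castLE_injective _)]
  let e := (LinearEquiv.ofInjective ι hι).trans (LinearEquiv.ofEq _ _ hrange)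
  have hWtop : W ≠ ⊤ := by
    rintro rfl
    simpa [hkn.ne] using e.finrank_eq
  have he : W.subtype ∘ₗ e.toLinearMap =
      Function.ExtendByZero.linearMap F (Fin.castLE hkn.le) := rfl
  have hTe : ∀ x, T (e x) = (Matrix.stackRows A C).mulVec x := by
    refine LinearMap.congr_fun (f := T ∘ₗ e.toLinearMap) (g := (Matrix.stackRows A C).mulVecLin)
      ((Pi.basisFun F (Fin k)).ext fun j => ?_)
    rw [Pi.basisFun_apply, LinearMap.comp_apply, Matrix.mulVecLin_apply, Matrix.mulVec_single_one,
      hT j _ (Function.ExtendByZero.linearMap_single (Fin.castLE_injective _) j 1)]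
    rfl
  rw [isSimple_iff_forall_eq_bot hWtop T e, Matrix.iInf_fin_ker_mul_pow_eq A C (by simp),
    Matrix.iInf_ker_mul_pow_eq_bot_iff]
  refine forall_congr' fun P => ?_
  rw [← and_imp, ← Matrix.forall_stackRows_mulVec_mem_map_iff hkn.le, he]
  simp only [hTe]
end

section
/- Let F_q be a finite field and V a finite-dimensional F_q-vector space. Let (W_1, W_2) and (W_1', W_2') be two pairs of k-dimensional subspaces of V such that dim(W_1 ∩ W_2) = dim(W_1' ∩ W_2') = l. Then the number of simple linear maps T : W_1 → V with image T(W_1) = W_2 equals the number of simple linear maps T : W_1' → V with image T(W_1') = W_2'. -/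
/-! Conjugation `T ↦ φ ∘ T ∘ φ⁻¹` by an automorphism `φ` of `V` preserves simplicity, so the count
only depends on the orbit of the pair `(W₁, W₂)` under `GL(V)`. That orbit is determined by
`dim W₁`, `dim W₂` and `dim (W₁ ∩ W₂)`: splitting `V = (W₁ ∩ W₂) ⊕ A ⊕ B ⊕ C` with
`W₁ = (W₁ ∩ W₂) ⊕ A` and `W₂ = (W₁ ∩ W₂) ⊕ B`, the dimensions of all four pieces are fixed by
these numbers, and matching the pieces of two such splittings gives the automorphism. -/

open Module

theorem iSupIndep_fin_four_of_disjoint {α : Type*} [CompleteLattice α] [IsModularLattice α]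
    {a b c d : α} (hab : Disjoint a b) (hc : Disjoint (a ⊔ b) c) (hd : Disjoint (a ⊔ b ⊔ c) d) :
    iSupIndep ![a, b, c, d] := by
  rw [iSupIndep_iff_supIndep_univ, show (Finset.univ : Finset (Fin 4)) = {3, 2, 1, 0} by decide]
  refine .insert (.insert (.insert (Finset.supIndep_singleton _ _) ?_) ?_) ?_
  · simpa using hab.symm
  · simpa [sup_comm] using hc.symm
  · simpa [sup_comm, sup_left_comm] using hd.symm

theorem iSup_fin_four {α : Type*} [CompleteLattice α] (a b c d : α) :
    ⨆ i, ![a, b, c, d] i = a ⊔ b ⊔ c ⊔ d := by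
  rw [← Finset.sup_univ_eq_iSup, show (Finset.univ : Finset (Fin 4)) = {3, 2, 1, 0} by decide]
  simp [sup_comm, sup_left_comm]

theorem DirectSum.IsInternal.exists_linearEquiv_map_eq {R M M' ι : Type*} [Semiring R]
    [AddCommMonoid M] [Module R M] [AddCommMonoid M'] [Module R M'] [DecidableEq ι]
    {A : ι → Submodule R M} {A' : ι → Submodule R M'} (h : IsInternal A) (h' : IsInternal A')
    (e : ∀ i, A i ≃ₗ[R] A' i) : ∃ φ : M ≃ₗ[R] M', ∀ i, (A i).map (φ : M →ₗ[R] M') = A' i := by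
  let φ := (LinearEquiv.ofBijective (coeLinearMap A) h).symm ≪≫ₗ
    DFinsupp.mapRange.linearEquiv e ≪≫ₗ LinearEquiv.ofBijective (coeLinearMap A') h'
  have hφ : ∀ i (x : A i), φ x = e i x := fun i x => by
    have : (LinearEquiv.ofBijective (coeLinearMap A) h).symm x = of _ i x :=
      (LinearEquiv.symm_apply_eq _).2 (coeLinearMap_of A i x).symm
    simp only [φ, LinearEquiv.trans_apply, this]
    change coeLinearMap A' (lmap (fun i => (e i : A i →ₗ[R] A' i)) (of _ i x)) = _
    rw [lmap_of, coeLinearMap_of]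
    rfl
  refine ⟨φ, fun i => le_antisymm ?_ fun y hy => ?_⟩
  · rintro _ ⟨x, hx, rfl⟩
    simp [hφ i ⟨x, hx⟩]
  · obtain ⟨x, hx⟩ := (e i).surjective ⟨y, hy⟩
    exact ⟨x, x.2, by simp [hφ, hx]⟩

namespace Submodule

variable {K V : Type*} [DivisionRing K] [AddCommGroup V] [Module K V]

theorem exists_isInternal_inf_sup (W₁ W₂ : Submodule K V) :
    ∃ A B C : Submodule K V, DirectSum.IsInternal ![W₁ ⊓ W₂, A, B, C] ∧
      W₁ ⊓ W₂ ⊔ A = W₁ ∧ W₁ ⊓ W₂ ⊔ B = W₂ ∧ IsCompl (W₁ ⊔ W₂) C := by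
  -- One complement `Q` of `W₁ ⊓ W₂` in `V` cuts out complements of it in `W₁` and in `W₂`
  -- (modular law), and the two pieces are independent since `Q ⊓ W₁ ⊓ W₂ = ⊥`.
  obtain ⟨Q, hQ⟩ := exists_isCompl (W₁ ⊓ W₂)
  obtain ⟨C, hC⟩ := exists_isCompl (W₁ ⊔ W₂)
  have hA : W₁ ⊓ W₂ ⊔ Q ⊓ W₁ = W₁ := by
    rw [← sup_inf_assoc_of_le Q inf_le_left, hQ.sup_eq_top, top_inf_eq]
  have hB : W₁ ⊓ W₂ ⊔ Q ⊓ W₂ = W₂ := by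
    rw [← sup_inf_assoc_of_le Q inf_le_right, hQ.sup_eq_top, top_inf_eq]
  have hAB : W₁ ⊓ W₂ ⊔ Q ⊓ W₁ ⊔ Q ⊓ W₂ = W₁ ⊔ W₂ := by
    conv_rhs => rw [← hB, ← sup_assoc, sup_eq_left.2 (inf_le_left : W₁ ⊓ W₂ ≤ W₁)]
    rw [hA]
  refine ⟨Q ⊓ W₁, Q ⊓ W₂, C, ?_, hA, hB, hC⟩
  refine DirectSum.isInternal_submodule_of_iSupIndep_of_iSup_eq_top
    (iSupIndep_fin_four_of_disjoint (hQ.disjoint.mono_right inf_le_left) ?_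
      (hAB ▸ hC.disjoint)) ?_
  · rw [hA, disjoint_iff, inf_left_comm]
    exact disjoint_iff.1 hQ.disjoint.symm
  · rw [iSup_fin_four, hAB, hC.sup_eq_top]

theorem finrank_sup_of_disjoint [FiniteDimensional K V] {s t : Submodule K V}
    (h : Disjoint s t) : finrank K ↥(s ⊔ t) = finrank K s + finrank K t := by
  rw [← finrank_sup_add_finrank_inf_eq, h.eq_bot, finrank_bot, add_zero]

theorem finrank_add_of_isInternal_inf_sup [FiniteDimensional K V] {W₁ W₂ A B C : Submodule K V}
    (hint : DirectSum.IsInternal ![W₁ ⊓ W₂, A, B, C]) (hA : W₁ ⊓ W₂ ⊔ A = W₁)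
    (hB : W₁ ⊓ W₂ ⊔ B = W₂) (hC : IsCompl (W₁ ⊔ W₂) C) :
    finrank K ↥(W₁ ⊓ W₂) + finrank K A = finrank K W₁ ∧
      finrank K ↥(W₁ ⊓ W₂) + finrank K B = finrank K W₂ ∧
      finrank K W₁ + finrank K W₂ + finrank K C = finrank K V + finrank K ↥(W₁ ⊓ W₂) := by
  have hdisj := hint.submodule_iSupIndep.pairwiseDisjoint
  refine ⟨?_, ?_, ?_⟩
  · have hIA : Disjoint (W₁ ⊓ W₂) A := hdisj (show (0 : Fin 4) ≠ 1 by decide)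
    rw [← finrank_sup_of_disjoint hIA, hA]
  · have hIB : Disjoint (W₁ ⊓ W₂) B := hdisj (show (0 : Fin 4) ≠ 2 by decide)
    rw [← finrank_sup_of_disjoint hIB, hB]
  · rw [← finrank_sup_add_finrank_inf_eq, ← finrank_add_eq_of_isCompl hC]
    ring

variable {V' : Type*} [AddCommGroup V'] [Module K V']

theorem exists_linearEquiv_map_eq_map_eq [FiniteDimensional K V] [FiniteDimensional K V']
    {W₁ W₂ : Submodule K V} {W₁' W₂' : Submodule K V'} (hV : finrank K V = finrank K V')
    (h₁ : finrank K W₁ = finrank K W₁') (h₂ : finrank K W₂ = finrank K W₂')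
    (h : finrank K ↥(W₁ ⊓ W₂) = finrank K ↥(W₁' ⊓ W₂')) :
    ∃ φ : V ≃ₗ[K] V', W₁.map (φ : V →ₗ[K] V') = W₁' ∧ W₂.map (φ : V →ₗ[K] V') = W₂' := by
  obtain ⟨A, B, C, hint, hA, hB, hC⟩ := W₁.exists_isInternal_inf_sup W₂
  obtain ⟨A', B', C', hint', hA', hB', hC'⟩ := W₁'.exists_isInternal_inf_sup W₂'
  have hrank : ∀ i, finrank K (![W₁ ⊓ W₂, A, B, C] i) =
      finrank K (![W₁' ⊓ W₂', A', B', C'] i) := by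
    obtain ⟨hA₁, hB₁, hC₁⟩ := finrank_add_of_isInternal_inf_sup hint hA hB hC
    obtain ⟨hA₁', hB₁', hC₁'⟩ := finrank_add_of_isInternal_inf_sup hint' hA' hB' hC'
    have hrA : finrank K A = finrank K A' := by omega
    have hrB : finrank K B = finrank K B' := by omega
    have hrC : finrank K C = finrank K C' := by omega
    intro i
    fin_cases i
    exacts [h, hrA, hrB, hrC]
  obtain ⟨φ, hφ⟩ :=
    hint.exists_linearEquiv_map_eq hint' fun i => LinearEquiv.ofFinrankEq _ _ (hrank i)
  refine ⟨φ, ?_, ?_⟩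
  · rw [← hA, ← hA', map_sup]
    exact congr_arg₂ (· ⊔ ·) (hφ 0) (hφ 1)
  · rw [← hB, ← hB', map_sup]
    exact congr_arg₂ (· ⊔ ·) (hφ 0) (hφ 2)

end Submodule

section Transport

variable {F V V' : Type*} [Field F] [AddCommGroup V] [Module F V] [AddCommGroup V'] [Module F V']

theorem isSimple_arrowCongr_iff (φ : V ≃ₗ[F] V') {W : Submodule F V} (T : W →ₗ[F] V) :
    IsSimple (W.map (φ : V →ₗ[F] V')) (LinearEquiv.arrowCongr (φ.submoduleMap W) φ T) ↔
      IsSimple W T := by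
  unfold IsSimple
  rw [(Submodule.orderIsoMapComap φ).surjective.forall]
  refine forall_congr' fun U => ?_
  simp only [Submodule.orderIsoMapComap_apply]
  rw [(φ.submoduleMap W).surjective.forall]
  simp [Submodule.map_le_map_iff_of_injective φ.injective]

theorem card_isSimple_range_eq_map_linearEquiv (φ : V ≃ₗ[F] V') (W₁ W₂ : Submodule F V) :
    Nat.card {T : W₁.map (φ : V →ₗ[F] V') →ₗ[F] V' //
        IsSimple (W₁.map (φ : V →ₗ[F] V')) T ∧ LinearMap.range T = W₂.map (φ : V →ₗ[F] V')} =
      Nat.card {T : W₁ →ₗ[F] V // IsSimple W₁ T ∧ LinearMap.range T = W₂} := by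
  refine Nat.card_congr ((LinearEquiv.arrowCongr (φ.submoduleMap W₁) φ).toEquiv.subtypeEquiv
    fun T => ?_).symm
  have hrange : LinearMap.range (LinearEquiv.arrowCongr (φ.submoduleMap W₁) φ T) =
      (LinearMap.range T).map (φ : V →ₗ[F] V') := by
    change LinearMap.range ((φ : V →ₗ[F] V') ∘ₗ T ∘ₗ
      ((φ.submoduleMap W₁).symm : W₁.map (φ : V →ₗ[F] V') →ₗ[F] W₁)) = _
    rw [LinearMap.range_comp, LinearMap.range_comp_of_range_eq_top _ (LinearEquiv.range _)]
  simp only [LinearEquiv.coe_toEquiv, isSimple_arrowCongr_iff, hrange,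
    (Submodule.map_injective_of_injective φ.injective).eq_iff]

end Transport

theorem card_simple_maps_with_image_depends_only_on_dims_general {F V : Type*} [Field F]
    [AddCommGroup V] [Module F V] [FiniteDimensional F V]
    (k l : ℕ) (W₁ W₂ W₁' W₂' : Submodule F V)
    (h1 : Module.finrank F W₁ = k) (h2 : Module.finrank F W₂ = k)
    (h1' : Module.finrank F W₁' = k) (h2' : Module.finrank F W₂' = k)
    (hl : Module.finrank F ↥(W₁ ⊓ W₂) = l) (hl' : Module.finrank F ↥(W₁' ⊓ W₂') = l) :
    Nat.card {T : W₁ →ₗ[F] V // IsSimple W₁ T ∧ LinearMap.range T = W₂} =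
      Nat.card {T : W₁' →ₗ[F] V // IsSimple W₁' T ∧ LinearMap.range T = W₂'} := by
  obtain ⟨φ, rfl, rfl⟩ := Submodule.exists_linearEquiv_map_eq_map_eq rfl
    (h1.trans h1'.symm) (h2.trans h2'.symm) (hl.trans hl'.symm)
  exact (card_isSimple_range_eq_map_linearEquiv φ W₁ W₂).symm

theorem card_simple_maps_with_image_depends_only_on_dims {F V : Type*} [Field F] [Fintype F]
    [AddCommGroup V] [Module F V] [FiniteDimensional F V]
    (k l : ℕ) (W₁ W₂ W₁' W₂' : Submodule F V)
    (h1 : Module.finrank F W₁ = k) (h2 : Module.finrank F W₂ = k)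
    (h1' : Module.finrank F W₁' = k) (h2' : Module.finrank F W₂' = k)
    (hl : Module.finrank F ↥(W₁ ⊓ W₂) = l) (hl' : Module.finrank F ↥(W₁' ⊓ W₂') = l) :
    Nat.card {T : W₁ →ₗ[F] V // IsSimple W₁ T ∧ LinearMap.range T = W₂} =
      Nat.card {T : W₁' →ₗ[F] V // IsSimple W₁' T ∧ LinearMap.range T = W₂'} :=
  card_simple_maps_with_image_depends_only_on_dims_general k l W₁ W₂ W₁' W₂' h1 h2 h1' h2' hl hl'
end

section
/- Let F_q be a finite field with q elements, V an n-dimensional F_q-vector space, W a fixed k-dimensional subspace of V, and 0 ≤ l ≤ k ≤ n. Then the number of k-dimensional subspaces U of V with dim(U ∩ W) = l equals N_q(k, l) · N_q(n−k, k−l) · q^{(k−l)^2}, where N_q(a, b) denotes the number of b-dimensional subspaces of an a-dimensional F_q-vector space. -/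
/-- `numSubspaces F a b` is the number of `b`-dimensional subspaces of an `a`-dimensional
vector space over the finite field `F` (the Gaussian binomial coefficient `[a choose b]_q`). -/
noncomputable def numSubspaces (F : Type*) [Field F] [Fintype F] (a b : ℕ) : ℕ :=
  Nat.card {U : Submodule F (Fin a → F) // Module.finrank F U = b}

open Module Submodule

section helpers
variable {F : Type*} [Field F] [Fintype F]

-- counting with constant fibers
lemma card_fiber_const {α β : Type*} [Finite α] [Finite β] (φ : α → β) (c : ℕ)
    (h : ∀ b, Nat.card {a // φ a = b} = c) : Nat.card α = Nat.card β * c := by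
  cases nonempty_fintype β
  haveI : ∀ b, Fintype {a // φ a = b} := fun b => Fintype.ofFinite _
  rw [Nat.card_congr (Equiv.sigmaFiberEquiv φ).symm]
  simp only [Nat.card_eq_fintype_card, Fintype.card_sigma]
  simp [← Nat.card_eq_fintype_card, h, Finset.sum_const, Finset.card_univ, mul_comm]

-- invariance of the subspace count
lemma numSubspaces_eq {V : Type*} [AddCommGroup V] [Module F V] [FiniteDimensional F V]
    {a : ℕ} (ha : Module.finrank F V = a) (b : ℕ) :
    Nat.card {U : Submodule F V // Module.finrank F U = b} = numSubspaces F a b := by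
  obtain ⟨e⟩ : Nonempty (V ≃ₗ[F] (Fin a → F)) :=
    FiniteDimensional.nonempty_linearEquiv_of_finrank_eq (by simp [ha])
  refine Nat.card_congr ?_
  exact { toFun := fun U => ⟨U.1.map e.toLinearMap,
            by rw [LinearEquiv.finrank_map_eq]; exact U.2⟩
          invFun := fun U => ⟨U.1.map e.symm.toLinearMap,
            by rw [LinearEquiv.finrank_map_eq]; exact U.2⟩
          left_inv := fun U => by
            ext1
            simp [← Submodule.map_comp]
          right_inv := fun U => by
            ext1
            simp [← Submodule.map_comp] }

-- cardinality of hom space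
lemma card_linearMap {M N : Type*} [AddCommGroup M] [Module F M] [FiniteDimensional F M]
    [AddCommGroup N] [Module F N] [FiniteDimensional F N] :
    Nat.card (M →ₗ[F] N) = Fintype.card F ^ (Module.finrank F M * Module.finrank F N) := by
  rw [Nat.card_congr (LinearMap.toMatrix (Module.finBasis F M) (Module.finBasis F N)).toEquiv]
  simp [Nat.card_eq_fintype_card, Matrix, Fintype.card_fun, pow_mul, mul_comm]

end helpers


section main
variable {F V : Type*} [Field F] [Fintype F] [AddCommGroup V] [Module F V]
  [FiniteDimensional F V]

lemma fiber2 {k l : ℕ} (W : Submodule F V) (hW : Module.finrank F W = k)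
    (hlk : l ≤ k) (X : Submodule F V) (hXW : X ≤ W) (hX : Module.finrank F X = l)
    (Y : Submodule F (V ⧸ W)) (hY : Module.finrank F Y = k - l) :
    Nat.card {U : Submodule F V //
        Module.finrank F U = k ∧ U ⊓ W = X ∧ U.map W.mkQ = Y} =
      Fintype.card F ^ ((k - l) ^ 2) := by
  classical
  set X' : Submodule F W := X.comap W.subtype with hX'def
  have hX'rank : Module.finrank F X' = l := by
    rw [LinearEquiv.finrank_eq (Submodule.comapSubtypeEquivOfLe hXW)]; exact hX
  have hQrank : Module.finrank F (W ⧸ X') = k - l := by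
    have := Submodule.finrank_quotient_add_finrank X'
    rw [hX'rank, hW] at this; omega
  -- sections
  obtain ⟨s, hs⟩ := W.mkQ.exists_rightInverse_of_surjective
    (LinearMap.range_eq_top.2 (Submodule.mkQ_surjective W))
  have hs' : ∀ z, W.mkQ (s z) = z := fun z => LinearMap.ext_iff.mp hs z
  obtain ⟨r, hr⟩ := X'.mkQ.exists_rightInverse_of_surjective
    (LinearMap.range_eq_top.2 (Submodule.mkQ_surjective X'))
  have hr' : ∀ z, X'.mkQ (r z) = z := fun z => LinearMap.ext_iff.mp hr z
  -- the map from hom spaces to subspaces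
  set h : (Y →ₗ[F] (W ⧸ X')) → (Y →ₗ[F] V) :=
    fun f => (s ∘ₗ Y.subtype) + (W.subtype ∘ₗ r ∘ₗ f) with hhdef
  have mkQ_zero : ∀ v ∈ W, W.mkQ v = 0 := fun v hv => by
    rwa [Submodule.mkQ_apply, Submodule.Quotient.mk_eq_zero]
  have hmkh : ∀ f (y : Y), W.mkQ (h f y) = (y : V ⧸ W) := by
    intro f y
    simp only [hhdef, LinearMap.add_apply, LinearMap.comp_apply, map_add, hs']
    simp only [Submodule.subtype_apply]
    rw [mkQ_zero _ (r (f y)).2, add_zero]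
  have hinj : ∀ f, Function.Injective (h f) := by
    intro f y y' hyy'
    have := congrArg W.mkQ hyy'
    rw [hmkh, hmkh] at this
    exact Subtype.ext this
  set Phi : (Y →ₗ[F] (W ⧸ X')) → Submodule F V :=
    fun f => X ⊔ LinearMap.range (h f) with hPhidef
  -- property (2)
  have hmap : ∀ f, (Phi f).map W.mkQ = Y := by
    intro f
    rw [hPhidef]
    simp only [Submodule.map_sup]
    have h1 : X.map W.mkQ = ⊥ := by
      rw [eq_bot_iff]
      rintro z hz
      obtain ⟨x, hx, rfl⟩ := Submodule.mem_map.mp hz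
      exact (Submodule.mem_bot F).2 (mkQ_zero x (hXW hx))
    have h2 : (LinearMap.range (h f)).map W.mkQ = Y := by
      rw [← LinearMap.range_comp]
      have : W.mkQ ∘ₗ (h f) = Y.subtype := by
        ext y; exact hmkh f y
      rw [this, Submodule.range_subtype]
    rw [h1, h2, bot_sup_eq]
  -- property (3)
  have hinf : ∀ f, Phi f ⊓ W = X := by
    intro f
    refine le_antisymm ?_ (le_inf le_sup_left hXW)
    rintro v ⟨hv1, hv2⟩
    obtain ⟨x, hx, w, hw, rfl⟩ := Submodule.mem_sup.mp hv1
    obtain ⟨y, rfl⟩ := hw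
    have h0 : W.mkQ (x + h f y) = 0 := mkQ_zero _ hv2
    rw [map_add, mkQ_zero x (hXW hx), hmkh, zero_add] at h0
    have : y = 0 := Subtype.ext h0
    rw [this, map_zero, add_zero]
    exact hx
  -- property (4)
  have hrank : ∀ f, Module.finrank F (Phi f) = k := by
    intro f
    show Module.finrank F ↥(X ⊔ LinearMap.range (h f)) = k
    have hdisj : X ⊓ LinearMap.range (h f) = ⊥ := by
      rw [eq_bot_iff]
      rintro v ⟨hv1, hv2⟩
      obtain ⟨y, rfl⟩ := hv2
      have h0 : W.mkQ (h f y) = 0 := mkQ_zero _ (hXW hv1)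
      rw [hmkh] at h0
      have : y = 0 := Subtype.ext h0
      rw [this, map_zero]; exact Submodule.zero_mem _
    have hre : Module.finrank F (LinearMap.range (h f)) = k - l := by
      rw [LinearMap.finrank_range_of_inj (hinj f)]
      exact hY
    have := Submodule.finrank_sup_add_finrank_inf_eq X (LinearMap.range (h f))
    rw [hdisj, hX, hre] at this
    simp only [finrank_bot] at this
    omega
  -- Phi is a bijection onto the set
  have key : Nat.card {U : Submodule F V //
        Module.finrank F U = k ∧ U ⊓ W = X ∧ U.map W.mkQ = Y} =
      Nat.card (Y →ₗ[F] (W ⧸ X')) := by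
    refine (Nat.card_eq_of_bijective
      (fun f => ⟨Phi f, hrank f, hinf f, hmap f⟩) ⟨?_, ?_⟩).symm
    · -- injective
      intro f g hfg
      have hUU : Phi f = Phi g := congrArg Subtype.val hfg
      ext y
      have h1 : h f y ∈ Phi g := by
        rw [← hUU]; exact Submodule.mem_sup_right ⟨y, rfl⟩
      obtain ⟨x, hx, w, hw, hsum⟩ := Submodule.mem_sup.mp h1
      obtain ⟨y', rfl⟩ := hw
      have h2 := congrArg W.mkQ hsum
      rw [map_add, mkQ_zero x (hXW hx), hmkh, hmkh, zero_add] at h2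
      have hy' : y' = y := Subtype.ext h2
      rw [hy'] at hsum
      have hdiff : h f y - h g y = W.subtype (r (f y) - r (g y)) := by
        simp only [hhdef, LinearMap.add_apply, LinearMap.comp_apply, map_sub]
        abel
      have hxe : x = W.subtype (r (f y) - r (g y)) :=
        (eq_sub_of_add_eq hsum).trans hdiff
      have hx' : r (f y) - r (g y) ∈ X' := by
        refine Submodule.mem_comap.mpr ?_
        exact hxe ▸ hx
      have h6 : X'.mkQ (r (f y) - r (g y)) = 0 := by
        rwa [Submodule.mkQ_apply, Submodule.Quotient.mk_eq_zero]
      rw [map_sub, hr', hr', sub_eq_zero] at h6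
      exact h6
    · -- surjective
      rintro ⟨U, hU1, hU2, hU3⟩
      have hXU : X ≤ U := hU2 ▸ inf_le_left
      have hmem : ∀ u : U, (W.mkQ ∘ₗ U.subtype) u ∈ Y := fun u =>
        hU3 ▸ Submodule.mem_map_of_mem u.2
      set p : U →ₗ[F] Y := LinearMap.codRestrict Y (W.mkQ ∘ₗ U.subtype) hmem with hpdef
      have hpsurj : LinearMap.range p = ⊤ := by
        rw [LinearMap.range_eq_top]
        rintro ⟨yv, hyv⟩
        rw [← hU3] at hyv
        obtain ⟨u, hu, rfl⟩ := Submodule.mem_map.mp hyv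
        exact ⟨⟨u, hu⟩, rfl⟩
      obtain ⟨t, ht⟩ := p.exists_rightInverse_of_surjective hpsurj
      have ht' : ∀ y : Y, W.mkQ ((t y : U) : V) = (y : V ⧸ W) := fun y =>
        congrArg Subtype.val (LinearMap.ext_iff.mp ht y)
      have hgmem : ∀ y : Y, (U.subtype ∘ₗ t - s ∘ₗ Y.subtype) y ∈ W := by
        intro y
        have h0 : W.mkQ ((U.subtype ∘ₗ t - s ∘ₗ Y.subtype) y) = 0 := by
          simp only [LinearMap.sub_apply, LinearMap.comp_apply, map_sub,
            Submodule.subtype_apply, hs']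
          rw [ht', sub_self]
        rwa [Submodule.mkQ_apply, Submodule.Quotient.mk_eq_zero] at h0
      set g : Y →ₗ[F] W := LinearMap.codRestrict W (U.subtype ∘ₗ t - s ∘ₗ Y.subtype) hgmem
        with hgdef
      have hgcoe : ∀ y : Y, ((g y : W) : V) = ((t y : U) : V) - s (Y.subtype y) := fun y => rfl
      refine ⟨X'.mkQ ∘ₗ g, Subtype.ext ?_⟩
      set f : Y →ₗ[F] (W ⧸ X') := X'.mkQ ∘ₗ g with hfdef
      show Phi f = U
      have hle : Phi f ≤ U := by
        apply sup_le hXU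
        rintro v ⟨y, rfl⟩
        have hX'mem : r (f y) - g y ∈ X' := by
          have h5 : X'.mkQ (r (f y) - g y) = 0 := by
            rw [map_sub, hr']
            show (X'.mkQ ∘ₗ g) y - X'.mkQ (g y) = 0
            rw [LinearMap.comp_apply, sub_self]
          rwa [Submodule.mkQ_apply, Submodule.Quotient.mk_eq_zero] at h5
        have hXmem : ((r (f y) - g y : W) : V) ∈ X := hX'mem
        have hexp : h f y = ((t y : U) : V) + ((r (f y) - g y : W) : V) := by
          simp only [hhdef, LinearMap.add_apply, LinearMap.comp_apply,
            Submodule.subtype_apply, Submodule.coe_sub, hgcoe]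
          abel
        rw [hexp]
        exact U.add_mem (t y).2 (hXU hXmem)
      exact Submodule.eq_of_le_of_finrank_eq hle (by rw [hrank f, hU1])
  rw [key, card_linearMap, hY, hQrank, sq]


lemma finite_submodule : Finite (Submodule F V) := by
  haveI : Finite V := Module.finite_of_finite F
  exact Finite.of_injective _ (fun p q h => SetLike.coe_injective h)

lemma fiber1 {n k l : ℕ} (hn : Module.finrank F V = n) (W : Submodule F V)
    (hW : Module.finrank F W = k) (hlk : l ≤ k)
    (X : Submodule F V) (hXW : X ≤ W) (hX : Module.finrank F X = l) :
    Nat.card {U : Submodule F V // Module.finrank F U = k ∧ U ⊓ W = X} =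
      numSubspaces F (n - k) (k - l) * Fintype.card F ^ ((k - l) ^ 2) := by
  haveI : Finite (Submodule F V) := finite_submodule
  haveI : Finite (Submodule F (V ⧸ W)) := finite_submodule
  have hQrank : Module.finrank F (V ⧸ W) = n - k := by
    have := Submodule.finrank_quotient_add_finrank W
    rw [hW, hn] at this; omega
  -- the rank of the image under mkQ
  have himg : ∀ U : Submodule F V, Module.finrank F U = k → U ⊓ W = X →
      Module.finrank F (U.map W.mkQ) = k - l := by
    intro U hU1 hU2
    have hXU : X ≤ U := hU2 ▸ inf_le_left
    have h1 := LinearMap.finrank_range_add_finrank_ker (W.mkQ ∘ₗ U.subtype)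
    have h2 : LinearMap.range (W.mkQ ∘ₗ U.subtype) = U.map W.mkQ := by
      rw [LinearMap.range_comp, Submodule.range_subtype]
    have h3 : LinearMap.ker (W.mkQ ∘ₗ U.subtype) = X.comap U.subtype := by
      rw [LinearMap.ker_comp, Submodule.ker_mkQ]
      ext u
      simp only [Submodule.mem_comap]
      constructor
      · intro hu
        rw [← hU2]; exact ⟨u.2, hu⟩
      · intro hu; exact hXW hu
    have h4 : Module.finrank F (X.comap U.subtype) = l := by
      rw [LinearEquiv.finrank_eq (Submodule.comapSubtypeEquivOfLe hXU)]; exact hX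
    rw [h2, h3, h4, hU1] at h1
    omega
  refine Eq.trans (card_fiber_const
    (fun U : {U : Submodule F V // Module.finrank F U = k ∧ U ⊓ W = X} =>
      (⟨U.1.map W.mkQ, himg U.1 U.2.1 U.2.2⟩ :
        {Y : Submodule F (V ⧸ W) // Module.finrank F Y = k - l}))
    (Fintype.card F ^ ((k - l) ^ 2)) ?_) ?_
  · intro Y
    rw [Nat.card_congr (?_ : _ ≃ {U : Submodule F V //
        Module.finrank F U = k ∧ U ⊓ W = X ∧ U.map W.mkQ = Y.1})]
    · exact fiber2 W hW hlk X hXW hX Y.1 Y.2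
    · exact
        { toFun := fun a => ⟨a.1.1, a.1.2.1, a.1.2.2, congrArg Subtype.val a.2⟩
          invFun := fun U => ⟨⟨U.1, U.2.1, U.2.2.1⟩, Subtype.ext U.2.2.2⟩
          left_inv := fun a => by ext : 2 <;> rfl
          right_inv := fun U => rfl }
  · rw [numSubspaces_eq hQrank]

end main


theorem card_subspaces_with_given_intersection_dim {F V : Type*} [Field F] [Fintype F]
    [AddCommGroup V] [Module F V] [FiniteDimensional F V]
    (q n k l : ℕ) (hq : Fintype.card F = q)
    (hn : Module.finrank F V = n) (W : Submodule F V) (hW : Module.finrank F W = k)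
    (hlk : l ≤ k) (hkn : k ≤ n) :
    Nat.card {U : Submodule F V //
        Module.finrank F U = k ∧ Module.finrank F ↥(U ⊓ W) = l} =
      numSubspaces F k l * numSubspaces F (n - k) (k - l) * q ^ ((k - l) ^ 2) := by
  subst hq
  haveI : Finite (Submodule F V) := finite_submodule
  have step := card_fiber_const
    (fun U : {U : Submodule F V //
        Module.finrank F U = k ∧ Module.finrank F ↥(U ⊓ W) = l} =>
      (⟨U.1 ⊓ W, inf_le_right, U.2.2⟩ :
        {X : Submodule F V // X ≤ W ∧ Module.finrank F X = l}))
    (numSubspaces F (n - k) (k - l) * Fintype.card F ^ ((k - l) ^ 2)) ?_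
  · rw [step]
    have hT : Nat.card {X : Submodule F V // X ≤ W ∧ Module.finrank F X = l} =
        numSubspaces F k l := by
      rw [← numSubspaces_eq hW l]
      refine Nat.card_congr ?_
      exact
        { toFun := fun X => ⟨X.1.comap W.subtype, by
            rw [LinearEquiv.finrank_eq (Submodule.comapSubtypeEquivOfLe X.2.1)]
            exact X.2.2⟩
          invFun := fun X' => ⟨X'.1.map W.subtype, Submodule.map_subtype_le W X'.1, by
            rw [Submodule.finrank_map_subtype_eq]; exact X'.2⟩
          left_inv := fun X => by
            ext1
            show Submodule.map W.subtype (Submodule.comap W.subtype X.1) = X.1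
            rw [Submodule.map_comap_subtype]
            exact inf_eq_right.2 X.2.1
          right_inv := fun X' => by
            ext1
            show Submodule.comap W.subtype (Submodule.map W.subtype X'.1) = X'.1
            exact Submodule.comap_map_eq_of_injective (Submodule.injective_subtype W) X'.1 }
    rw [hT, mul_assoc]
  · intro X
    rw [Nat.card_congr (?_ : _ ≃ {U : Submodule F V //
        Module.finrank F U = k ∧ U ⊓ W = X.1})]
    · exact fiber1 hn W hW hlk X.1 X.2.1 X.2.2
    · exact
        { toFun := fun a => ⟨a.1.1, a.1.2.1, congrArg Subtype.val a.2⟩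
          invFun := fun U => ⟨⟨U.1, U.2.1, by rw [U.2.2]; exact X.2.2⟩, Subtype.ext U.2.2⟩
          left_inv := fun a => by ext : 2 <;> rfl
          right_inv := fun U => rfl }
end
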